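/- Let n ≥ 1. For every α = Σ_A α_A e_A ∈ 𝒜 and every i with 1 ≤ i ≤ n, the scalar part of ᾱ eᵢ α ēᵢ equals Σ_{A : i∉A} (−1)^{|A|} α_A² + Σ_{A : i∈A} (−1)^{|A|+1} α_A². Consequently [ᾱ eᵢ α ēᵢ − ᾱα]₀ = −2 ( Σ_{A : i∉A, |A| odd} α_A² + Σ_{A : i∈A, |A| even} α_A² ). -/
import Mathlib


open MeasureTheory

noncomputable section

/-- `ℝ^{n+1}` with coordinates `x₀, …, xₙ`. -/
abbrev RV (n : ℕ) : Type := Fin (n + 1) → ℝ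

/-- The real Clifford algebra `𝒜` generated by `e₁, …, eₙ` (with `eᵢ² = -1`),
presented by its coefficients over the basis `{e_A : A ⊆ {1,…,n}}`. -/
abbrev CA (n : ℕ) : Type := Finset (Fin n) → ℝ

namespace CA

variable {n : ℕ}

/-- The sign occurring in the product `e_A · e_B = msign A B • e_{A Δ B}`. -/
def msign (A B : Finset (Fin n)) : ℝ :=
  (-1 : ℝ) ^ (((A ×ˢ B).filter fun p => p.2 < p.1).card + (A ∩ B).card)

/-- Clifford multiplication, written on coefficients. -/
def cmul (a b : CA n) : CA n := fun C =>
  ∑ A : Finset (Fin n), ∑ B : Finset (Fin n),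
    if symmDiff A B = C then msign A B * a A * b B else 0

/-- The conjugation `ā = Σ_A a_A ē_A`, `ē_A = (-1)^{|A|(|A|+1)/2} e_A`. -/
def conj (a : CA n) : CA n := fun A => (-1 : ℝ) ^ (A.card * (A.card + 1) / 2) * a A

/-- The scalar part `[a]₀`. -/
def scalarPart (a : CA n) : ℝ := a ∅

/-- `|a|₀² = 2ⁿ Σ_A a_A²`. -/
def normSq (a : CA n) : ℝ := 2 ^ n * ∑ A : Finset (Fin n), (a A) ^ 2

/-- `|a|₀`. -/
def norm0 (a : CA n) : ℝ := Real.sqrt (normSq a)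

/-- The unit `e₀ = 1`. -/
def one : CA n := fun A => if A = ∅ then 1 else 0

/-- The generator `eᵢ`, `1 ≤ i ≤ n`. -/
def gen (i : Fin n) : CA n := fun A => if A = {i} then 1 else 0

/-- `e_i` for `i : Fin (n+1)`: `e_0 = 1` and `e_i` a generator for `i ≥ 1`. -/
def eV : Fin (n + 1) → CA n
  | ⟨0, _⟩ => one
  | ⟨k + 1, hk⟩ => gen ⟨k, Nat.succ_lt_succ_iff.mp hk⟩

/-- `ēᵢ`: `ē₀ = 1`, `ēᵢ = -eᵢ` for `i ≥ 1`. -/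
def eVbar (i : Fin (n + 1)) : CA n := conj (eV i)

end CA

/-- The partial derivative `∂F/∂xᵢ` of an `𝒜`-valued function, componentwise. -/
def pd {n : ℕ} (F : RV n → CA n) (i : Fin (n + 1)) (x : RV n) : CA n :=
  fun A => fderiv ℝ (fun y => F y A) x (Pi.single i 1)

/-- The Dirac operator acting from the left: `D̄F = Σᵢ eᵢ ∂F/∂xᵢ`. -/
def DiracL {n : ℕ} (F : RV n → CA n) (x : RV n) : CA n :=
  ∑ i : Fin (n + 1), CA.cmul (CA.eV i) (pd F i x)

/-- The Dirac operator acting from the right: `FD̄ = Σᵢ (∂F/∂xᵢ) eᵢ`. -/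
def DiracR {n : ℕ} (F : RV n → CA n) (x : RV n) : CA n :=
  ∑ i : Fin (n + 1), CA.cmul (pd F i x) (CA.eV i)

/-- The conjugate operator acting from the left: `DF = Σᵢ ēᵢ ∂F/∂xᵢ`. -/
def DconjL {n : ℕ} (F : RV n → CA n) (x : RV n) : CA n :=
  ∑ i : Fin (n + 1), CA.cmul (CA.eVbar i) (pd F i x)

/-- The conjugate operator acting from the right: `FD = Σᵢ (∂F/∂xᵢ) ēᵢ`. -/
def DconjR {n : ℕ} (F : RV n → CA n) (x : RV n) : CA n :=
  ∑ i : Fin (n + 1), CA.cmul (pd F i x) (CA.eVbar i)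

/-- Partial derivative of a real-valued function. -/
def pdR {n : ℕ} (φ : RV n → ℝ) (i : Fin (n + 1)) (x : RV n) : ℝ :=
  fderiv ℝ φ x (Pi.single i 1)

/-- Second partial derivative `∂²φ/∂xᵢ∂xⱼ`. -/
def pdR2 {n : ℕ} (φ : RV n → ℝ) (i j : Fin (n + 1)) (x : RV n) : ℝ :=
  fderiv ℝ (fun y => fderiv ℝ φ y (Pi.single j 1)) x (Pi.single i 1)

/-- The Laplacian `Δφ = Σᵢ ∂²φ/∂xᵢ²`. -/
def lap {n : ℕ} (φ : RV n → ℝ) (x : RV n) : ℝ := ∑ i : Fin (n + 1), pdR2 φ i i x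

/-- `Dφ = ∂φ/∂x₀ - Σ_{i≥1} eᵢ ∂φ/∂xᵢ` as a Clifford-algebra-valued function. -/
def Dgrad {n : ℕ} (φ : RV n → ℝ) (x : RV n) : CA n :=
  ∑ i : Fin (n + 1), pdR φ i x • CA.eVbar i

/-- The dual operator `D̄*_φ α = α (Dφ) - Dα`. -/
def dualOp {n : ℕ} (φ : RV n → ℝ) (α : RV n → CA n) (x : RV n) : CA n :=
  CA.cmul (α x) (Dgrad φ x) - DconjL α x

/-- `α ∈ C_c^∞(Ω, 𝒜)`. -/
def IsTest {n : ℕ} (Ω : Set (RV n)) (α : RV n → CA n) : Prop :=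
  ContDiff ℝ (⊤ : ℕ∞) α ∧ HasCompactSupport α ∧ tsupport α ⊆ Ω

/-- `f ∈ L²(Ω, 𝒜, φ)`: measurable with `∫_Ω |f|₀² e^{-φ} dx < ∞`. -/
def MemL2w {n : ℕ} (Ω : Set (RV n)) (φ : RV n → ℝ) (f : RV n → CA n) : Prop :=
  AEStronglyMeasurable f (volume.restrict Ω) ∧
  Integrable (fun x => CA.normSq (f x) * Real.exp (-φ x)) (volume.restrict Ω)

/-- `u` is a weak solution of `D̄u = f` on `Ω`:
`∫_Ω α f dx = -∫_Ω (α D̄) u dx` for all `α ∈ C_c^∞(Ω, 𝒜)`. -/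
def IsWeakSol {n : ℕ} (Ω : Set (RV n)) (u f : RV n → CA n) : Prop :=
  ∀ α : RV n → CA n, IsTest Ω α →
    ∫ x in Ω, CA.cmul (α x) (f x) = -∫ x in Ω, CA.cmul (DiracR α x) (u x)

/-- The `𝒜`-valued inner product `(f,g)_φ = ∫_Ω f̄ g e^{-φ} dx`. -/
def innerW {n : ℕ} (Ω : Set (RV n)) (φ : RV n → ℝ) (f g : RV n → CA n) : CA n :=
  ∫ x in Ω, Real.exp (-φ x) • CA.cmul (CA.conj (f x)) (g x)


section Aux

open Finset

private lemma neg_one_pow_parity (m k : ℕ) (h : m % 2 = k % 2) : (-1:ℝ)^m = (-1)^k := by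
  conv_lhs => rw [← Nat.div_add_mod m 2]
  conv_rhs => rw [← Nat.div_add_mod k 2]
  rw [pow_add, pow_add, pow_mul, pow_mul, h]
  norm_num

private lemma symmDiff_eq_iff' {n : ℕ} (A B C : Finset (Fin n)) :
    symmDiff A B = C ↔ A = symmDiff C B := by
  constructor
  · rintro rfl; rw [symmDiff_symmDiff_cancel_right]
  · rintro rfl; rw [symmDiff_symmDiff_cancel_right]

private lemma cmul_apply' {n : ℕ} (a b : CA n) (C : Finset (Fin n)) :
    CA.cmul a b C = ∑ B : Finset (Fin n),
      CA.msign (symmDiff C B) B * a (symmDiff C B) * b B := by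
  unfold CA.cmul
  rw [Finset.sum_comm]
  refine Finset.sum_congr rfl fun B _ => ?_
  rw [Finset.sum_eq_single (symmDiff C B)]
  · rw [if_pos (by rw [symmDiff_symmDiff_cancel_right])]
  · intro A _ hA
    rw [if_neg]
    intro h
    exact hA ((symmDiff_eq_iff' ..).mp h)
  · simp

end Aux
section Aux2
open Finset

private lemma cmul_gen_apply {n : ℕ} (a : CA n) (i : Fin n) (C : Finset (Fin n)) :
    CA.cmul a (CA.gen i) C = CA.msign (symmDiff C {i}) {i} * a (symmDiff C {i}) := by
  rw [cmul_apply', Finset.sum_eq_single {i}]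
  · simp [CA.gen]
  · intro B _ hB; simp [CA.gen, hB]
  · simp

private lemma conj_gen {n : ℕ} (i : Fin n) (A : Finset (Fin n)) :
    CA.conj (CA.gen i) A = -(CA.gen i A) := by
  unfold CA.conj CA.gen
  by_cases h : A = {i} <;> simp [h]

private lemma cmul_genbar_apply {n : ℕ} (a : CA n) (i : Fin n) (C : Finset (Fin n)) :
    CA.cmul a (CA.conj (CA.gen i)) C
      = -(CA.msign (symmDiff C {i}) {i} * a (symmDiff C {i})) := by
  rw [cmul_apply', Finset.sum_eq_single {i}]
  · rw [conj_gen]; simp [CA.gen]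
  · intro B _ hB; rw [conj_gen]; simp [CA.gen, hB]
  · simp

end Aux2
section Aux3
open Finset

private lemma prod_sing_filter {n : ℕ} (i : Fin n) (B : Finset (Fin n)) :
    (({i} ×ˢ B).filter fun p => p.2 < p.1) = {i} ×ˢ (B.filter fun c => c < i) := by
  ext p
  simp only [Finset.mem_filter, Finset.mem_product, Finset.mem_singleton]
  constructor
  · rintro ⟨⟨h1, h2⟩, h3⟩; exact ⟨h1, h2, h1 ▸ h3⟩
  · rintro ⟨h1, h2, h3⟩; exact ⟨⟨h1, h2⟩, h1 ▸ h3⟩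

private lemma sing_prod_filter {n : ℕ} (i : Fin n) (B : Finset (Fin n)) :
    ((B ×ˢ {i}).filter fun p => p.2 < p.1) = (B.filter fun a => i < a) ×ˢ {i} := by
  ext p
  simp only [Finset.mem_filter, Finset.mem_product, Finset.mem_singleton]
  constructor
  · rintro ⟨⟨h1, h2⟩, h3⟩; exact ⟨⟨h1, h2 ▸ h3⟩, h2⟩
  · rintro ⟨⟨h1, h3⟩, h2⟩; exact ⟨⟨h1, h2⟩, h2 ▸ h3⟩

private lemma tau_insert_left {n : ℕ} (i : Fin n) (A B : Finset (Fin n)) (h : i ∉ A) :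
    (((insert i A) ×ˢ B).filter fun p => p.2 < p.1).card
      = ((A ×ˢ B).filter fun p => p.2 < p.1).card + (B.filter fun c => c < i).card := by
  have h1 : (insert i A) ×ˢ B = ({i} ×ˢ B) ∪ (A ×ˢ B) := by
    ext p
    simp only [Finset.mem_product, Finset.mem_insert, Finset.mem_union, Finset.mem_singleton]
    tauto
  rw [h1, Finset.filter_union, Finset.card_union_of_disjoint, prod_sing_filter,
    Finset.card_product, Finset.card_singleton, one_mul, add_comm]
  rw [Finset.disjoint_left]
  rintro p hp hp'
  simp only [Finset.mem_filter, Finset.mem_product, Finset.mem_singleton] at hp hp'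
  exact h (hp.1.1 ▸ hp'.1.1)

private lemma tau_insert_right {n : ℕ} (i : Fin n) (A B : Finset (Fin n)) (h : i ∉ B) :
    ((A ×ˢ (insert i B)).filter fun p => p.2 < p.1).card
      = ((A ×ˢ B).filter fun p => p.2 < p.1).card + (A.filter fun a => i < a).card := by
  have h1 : A ×ˢ (insert i B) = (A ×ˢ {i}) ∪ (A ×ˢ B) := by
    ext p
    simp only [Finset.mem_product, Finset.mem_insert, Finset.mem_union, Finset.mem_singleton]
    tauto
  rw [h1, Finset.filter_union, Finset.card_union_of_disjoint, sing_prod_filter,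
    Finset.card_product, Finset.card_singleton, mul_one, add_comm]
  rw [Finset.disjoint_left]
  rintro p hp hp'
  simp only [Finset.mem_filter, Finset.mem_product, Finset.mem_singleton] at hp hp'
  exact h (hp.1.2 ▸ hp'.1.2)

private lemma filter_lt_add_gt {n : ℕ} (i : Fin n) (B : Finset (Fin n)) :
    (B.filter fun a => a < i).card + (B.filter fun a => i < a).card
      + (if i ∈ B then 1 else 0) = B.card := by
  have h0 := Finset.card_filter_add_card_filter_not (s := B) (p := fun a => a < i)
  have h1 : B.filter (fun a => ¬ a < i) = (B.filter fun a => i < a) ∪ (B.filter fun a => a = i) := by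
    ext a
    simp only [Finset.mem_filter, Finset.mem_union, not_lt]
    constructor
    · rintro ⟨ha, hle⟩
      rcases lt_or_eq_of_le hle with h' | h'
      · exact Or.inl ⟨ha, h'⟩
      · exact Or.inr ⟨ha, h'.symm⟩
    · rintro (⟨ha, h'⟩ | ⟨ha, h'⟩)
      · exact ⟨ha, le_of_lt h'⟩
      · exact ⟨ha, le_of_eq h'.symm⟩
  have h2 : B.filter (fun a => a = i) = if i ∈ B then {i} else ∅ := Finset.filter_eq' B i
  have h3 : ((B.filter fun a => i < a) ∪ (B.filter fun a => a = i)).card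
      = (B.filter fun a => i < a).card + (B.filter fun a => a = i).card := by
    apply Finset.card_union_of_disjoint
    rw [Finset.disjoint_left]
    rintro a ha ha'
    simp only [Finset.mem_filter] at ha ha'
    exact absurd (ha'.2 ▸ ha.2) (lt_irrefl i)
  have h4 : (B.filter fun a => a = i).card = if i ∈ B then 1 else 0 := by
    rw [h2]; split <;> simp
  rw [h1, h3, h4] at h0
  omega

end Aux3
section Aux4
open Finset

private lemma tau_self {n : ℕ} (B : Finset (Fin n)) :
    ((B ×ˢ B).filter fun p => p.2 < p.1).card * 2 + B.card = B.card * B.card := by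
  induction B using Finset.induction_on with
  | empty => simp
  | @insert a B ha ih =>
    rw [tau_insert_right a (insert a B) B ha, tau_insert_left a B B ha,
      Finset.filter_insert, if_neg (lt_irrefl a), Finset.card_insert_of_notMem ha]
    have hLG := filter_lt_add_gt a B
    rw [if_neg ha] at hLG
    have hsq : (B.card + 1) * (B.card + 1) = B.card * B.card + 2 * B.card + 1 := by ring
    omega

private lemma symmDiff_singleton_not_mem {n : ℕ} {i : Fin n} {B : Finset (Fin n)} (h : i ∉ B) :
    symmDiff {i} B = insert i B := by
  ext a
  simp only [Finset.mem_symmDiff, Finset.mem_singleton, Finset.mem_insert]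
  constructor
  · rintro (⟨rfl, -⟩ | ⟨hB, -⟩)
    · exact Or.inl rfl
    · exact Or.inr hB
  · rintro (rfl | hB)
    · exact Or.inl ⟨rfl, h⟩
    · exact Or.inr ⟨hB, fun h' => h (h' ▸ hB)⟩

private lemma symmDiff_singleton_mem {n : ℕ} {i : Fin n} {B : Finset (Fin n)} (h : i ∈ B) :
    symmDiff {i} B = B.erase i := by
  ext a
  simp only [Finset.mem_symmDiff, Finset.mem_singleton, Finset.mem_erase]
  constructor
  · rintro (⟨rfl, hB⟩ | ⟨hB, hne⟩)
    · exact absurd h hB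
    · exact ⟨hne, hB⟩
  · rintro ⟨hne, hB⟩
    exact Or.inr ⟨hB, hne⟩

private lemma two_T {n : ℕ} (b : ℕ) : (b * (b + 1) / 2) * 2 = b * b + b := by
  have h : b * (b + 1) = b * b + b := by ring
  have he : 2 ∣ b * (b + 1) := (Nat.even_mul_succ_self b).two_dvd
  omega

end Aux4
section Aux5
open Finset

private lemma sign_key {n : ℕ} (i : Fin n) (B : Finset (Fin n)) :
    CA.msign (symmDiff {i} B) B * CA.msign B {i} * (-1 : ℝ) ^ (B.card * (B.card + 1) / 2)
      = if i ∈ B then (-1 : ℝ) ^ (B.card + 1) else (-1) ^ B.card := by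
  unfold CA.msign
  rw [sing_prod_filter, Finset.card_product, Finset.card_singleton, mul_one]
  have ht := tau_self B
  have hT := two_T (n := n) B.card
  by_cases h : i ∈ B
  · rw [if_pos h, symmDiff_singleton_mem h,
      Finset.inter_singleton_of_mem h, Finset.card_singleton]
    have hins : insert i (B.erase i) = B := Finset.insert_erase h
    have ht' := tau_insert_left i (B.erase i) B (Finset.notMem_erase i B)
    rw [hins] at ht'
    have hE : (B.erase i) ∩ B = B.erase i :=
      Finset.inter_eq_left.mpr (Finset.erase_subset i B)
    rw [hE, Finset.card_erase_of_mem h]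
    have hLG := filter_lt_add_gt i B
    rw [if_pos h] at hLG
    rw [← pow_add, ← pow_add]
    exact neg_one_pow_parity _ _ (by omega)
  · rw [if_neg h, symmDiff_singleton_not_mem h,
      Finset.inter_singleton_of_notMem h, Finset.card_empty]
    have ht' := tau_insert_left i B B h
    have hI : (insert i B) ∩ B = B := Finset.inter_eq_right.mpr (Finset.subset_insert i B)
    rw [hI]
    have hLG := filter_lt_add_gt i B
    rw [if_neg h] at hLG
    rw [ht', ← pow_add, ← pow_add]
    exact neg_one_pow_parity _ _ (by omega)

end Aux5
section Aux6
open Finset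

private lemma empty_symmDiff' {n : ℕ} (B : Finset (Fin n)) :
    symmDiff (∅ : Finset (Fin n)) B = B := by
  ext a; simp [Finset.mem_symmDiff]

private lemma msign_singleton_self {n : ℕ} (i : Fin n) :
    CA.msign ({i} : Finset (Fin n)) {i} = -1 := by
  unfold CA.msign
  rw [Finset.singleton_product_singleton, Finset.filter_singleton,
    if_neg (lt_irrefl i)]
  simp

private lemma scalar_big {n : ℕ} (α : CA n) (i : Fin n) :
    CA.scalarPart
        (CA.cmul (CA.cmul (CA.cmul (CA.conj α) (CA.gen i)) α) (CA.conj (CA.gen i)))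
      = ∑ B : Finset (Fin n),
          (if i ∈ B then (-1:ℝ) ^ (B.card + 1) else (-1) ^ B.card) * α B ^ 2 := by
  unfold CA.scalarPart
  rw [cmul_genbar_apply, empty_symmDiff', msign_singleton_self, neg_one_mul, neg_neg,
    cmul_apply']
  refine Finset.sum_congr rfl fun B _ => ?_
  have hcan : symmDiff (symmDiff {i} B) {i} = B := by
    rw [symmDiff_comm {i} B, symmDiff_symmDiff_cancel_right]
  rw [cmul_gen_apply, hcan]
  have hc : CA.conj α B = (-1 : ℝ) ^ (B.card * (B.card + 1) / 2) * α B := rfl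
  rw [hc, ← sign_key i B]
  ring

private lemma scalar_conj_mul {n : ℕ} (α : CA n) :
    CA.scalarPart (CA.cmul (CA.conj α) α) = ∑ B : Finset (Fin n), α B ^ 2 := by
  unfold CA.scalarPart
  rw [cmul_apply']
  refine Finset.sum_congr rfl fun B _ => ?_
  rw [empty_symmDiff']
  have hc : CA.conj α B = (-1 : ℝ) ^ (B.card * (B.card + 1) / 2) * α B := rfl
  rw [hc]
  unfold CA.msign
  rw [Finset.inter_self]
  have ht := tau_self B
  have hT := two_T (n := n) B.card
  rw [neg_one_pow_parity _ (B.card * (B.card + 1) / 2) (by omega)]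
  have h2 : (-1 : ℝ) ^ (B.card * (B.card + 1) / 2) * (-1) ^ (B.card * (B.card + 1) / 2) = 1 := by
    rw [← pow_add]
    rw [neg_one_pow_parity _ 0 (by omega)]
    norm_num
  linear_combination α B ^ 2 * h2

end Aux6
theorem scalarPart_conj_gen_mul_genbar {n : ℕ} (hn : 1 ≤ n) (α : CA n) (i : Fin n) :
    CA.scalarPart
        (CA.cmul (CA.cmul (CA.cmul (CA.conj α) (CA.gen i)) α) (CA.conj (CA.gen i))) =
      (∑ A ∈ Finset.univ.filter (fun A : Finset (Fin n) => i ∉ A),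
        (-1 : ℝ) ^ A.card * α A ^ 2) +
      ∑ A ∈ Finset.univ.filter (fun A : Finset (Fin n) => i ∈ A),
        (-1 : ℝ) ^ (A.card + 1) * α A ^ 2 ∧
    CA.scalarPart
        (CA.cmul (CA.cmul (CA.cmul (CA.conj α) (CA.gen i)) α) (CA.conj (CA.gen i))) -
      CA.scalarPart (CA.cmul (CA.conj α) α) =
      -2 * ((∑ A ∈ Finset.univ.filter
              (fun A : Finset (Fin n) => i ∉ A ∧ Odd A.card), α A ^ 2) +
            ∑ A ∈ Finset.univ.filter
              (fun A : Finset (Fin n) => i ∈ A ∧ Even A.card), α A ^ 2) := by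
  constructor
  · rw [scalar_big, Finset.sum_filter, Finset.sum_filter, ← Finset.sum_add_distrib]
    refine Finset.sum_congr rfl fun A _ => ?_
    by_cases h : i ∈ A <;> simp [h]
  · rw [scalar_big, scalar_conj_mul, ← Finset.sum_sub_distrib,
      Finset.sum_filter, Finset.sum_filter, ← Finset.sum_add_distrib, Finset.mul_sum]
    refine Finset.sum_congr rfl fun A _ => ?_
    rcases Nat.even_or_odd A.card with he | ho
    · by_cases h : i ∈ A <;>
        simp [h, he, he.neg_one_pow, Nat.not_odd_iff_even.mpr he, pow_succ] <;> ring
    · by_cases h : i ∈ A <;>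
        simp [h, ho, ho.neg_one_pow, Nat.not_even_iff_odd.mpr ho, pow_succ] <;> ring

end
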